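/- Fix integers k ≥ 2 and n ≥ 1. For every (γ₁, γ₂) ∈ 𝒫̃^{k,0}_{n,0,1} the final step of γ₁ is an E step, and the map that deletes the final step of γ₁ is a bijection from 𝒫̃^{k,0}_{n,0,1} onto 𝒫^{k,1}_{n,1}; in particular |𝒫̃^{k,0}_{n,0,1}| = |𝒫^{k,1}_{n,1}|. -/

import Mathlib

/-- A step of a lattice path: `E = (1,0)` or `N = (0,1)`. -/
inductive Step : Type
  | E | N
deriving DecidableEq, Repr

instance : Fintype Step :=
  ⟨{Step.E, Step.N}, fun x => by cases x <;> simp⟩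

/-- The terminal point of a lattice path starting at `(0,0)`. -/
def endpoint (γ : List Step) : ℤ × ℤ :=
  ((γ.count Step.E : ℤ), (γ.count Step.N : ℤ))

/-- The set of lattice points visited by a lattice path starting at `(0,0)`. -/
def vertices (γ : List Step) : Set (ℤ × ℤ) :=
  {p | ∃ i ≤ γ.length, endpoint (γ.take i) = p}

/-- The bottom-path condition: `γ = E N^{b₁} E N^{b₂} ⋯ E N^{b_m}` where every
`bᵢ ≡ k - 2 (mod k - 1)`. -/
def kGoodBottom (k : ℕ) (γ : List Step) : Prop :=
  ∃ bs : List ℕ, (∀ b ∈ bs, b % (k - 1) = (k - 2) % (k - 1)) ∧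
    γ = (bs.map fun b => Step.E :: List.replicate b Step.N).flatten

/-- `γ₁` stays weakly above `γ₂`: no visited point of `γ₂` lies strictly above a
visited point of `γ₁` with the same `x`-coordinate. -/
def weaklyAbove (γ₁ γ₂ : List Step) : Prop :=
  ∀ p ∈ vertices γ₁, ∀ q ∈ vertices γ₂, p.1 = q.1 → q.2 ≤ p.2

/-- The set `𝒫^{k,ε}_{n,δ}` of `k`-path pairs of length `((k-1)n - ε, (k-1)n)`
and distance `δ`. -/
def PathPairs (k n ε δ : ℕ) : Set (List Step × List Step) :=
  {p | p.1.length = (k - 1) * n - ε ∧ p.1.head? = some Step.N ∧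
       p.2.length = (k - 1) * n ∧ p.2.head? = some Step.E ∧
       (∀ q ∈ vertices p.1 ∩ vertices p.2, q = ((0 : ℤ), (0 : ℤ))) ∧
       (endpoint p.2).1 - (endpoint p.1).1 = (δ : ℤ) ∧
       kGoodBottom k p.2}

/-- The set `𝒫̃^{k,ε}_{n,δ,m}` of weak `k`-path pairs of distance `δ` with
exactly `m` returns (intersections away from the origin). -/
def WeakPathPairs (k n ε δ m : ℕ) : Set (List Step × List Step) :=
  {p | p.1.length = (k - 1) * n - ε ∧ p.1.head? = some Step.N ∧
       p.2.length = (k - 1) * n ∧ p.2.head? = some Step.E ∧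
       weaklyAbove p.1 p.2 ∧
       (endpoint p.2).1 - (endpoint p.1).1 = (δ : ℤ) ∧
       kGoodBottom k p.2 ∧
       ((vertices p.1 ∩ vertices p.2) \ {((0 : ℤ), (0 : ℤ))}).ncard = m}

/-- The generating function `C_k(t) = ∑_{n≥0} (1/(kn+1)) C(kn+1, n) tⁿ` of the
`k`-Catalan (Fuss–Catalan) numbers, as a formal power series over `ℚ`. -/
def fussCatalanGF (k : ℕ) : PowerSeries ℚ :=
  PowerSeries.mk fun n => (((k * n + 1 : ℕ) : ℚ))⁻¹ * ((k * n + 1).choose n : ℚ)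

/-!
In an irreducible closed pair both paths end at the same point, and this is their only common
vertex besides the origin. If `γ₁` ended with an `N` step, the vertex before it would lie
strictly below the end of `γ₂`, contradicting weak domination; so `γ₁` ends with `E`, and
deleting that step leaves two paths that meet only at the origin, at distance one.

Conversely, let `γ₁` leave the origin by `N` and `γ₂` by `E`, meeting nowhere else. After the
same number `i ≥ 1` of steps, the difference of their `x`-coordinates starts at `1`, changes by
at most one per step and never vanishes (equal `x` after equally many steps is a common vertex),
so it stays positive; hence `γ₁` is weakly above `γ₂`, and appending `E` to `γ₁` closes the pair
at the end of `γ₂`.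
-/

open Step

lemma count_E_add_count_N (l : List Step) : l.count E + l.count N = l.length := by
  induction l with
  | nil => rfl
  | cons s l ih => cases s <;> simp <;> omega

lemma List.count_take_add_one_le {α : Type*} [BEq α] (l : List α) (a : α) (i : ℕ) :
    (l.take (i + 1)).count a ≤ (l.take i).count a + 1 := by
  rw [List.take_add_one, List.count_append]
  have : l[i]?.toList.count a ≤ 1 :=
    List.count_le_length.trans (by cases l[i]? <;> simp)
  omega

lemma List.take_one_of_head? {α : Type*} {l : List α} {a : α} (h : l.head? = some a) :
    l.take 1 = [a] := by
  rw [List.take_one, h, Option.toList_some]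

lemma Set.ncard_eq_one_iff_eq_singleton_of_mem {α : Type*} {s : Set α} {a : α} (ha : a ∈ s) :
    s.ncard = 1 ↔ s = {a} := by
  refine ⟨fun h => ?_, fun h => by rw [h, Set.ncard_singleton]⟩
  obtain ⟨b, rfl⟩ := Set.ncard_eq_one.mp h
  rw [Set.mem_singleton_iff.mp ha]

lemma endpoint_append (l₁ l₂ : List Step) : endpoint (l₁ ++ l₂) = endpoint l₁ + endpoint l₂ := by
  simp [endpoint, List.count_append]

@[simp]
lemma endpoint_concat_E (l : List Step) : endpoint (l ++ [E]) = endpoint l + (1, 0) := by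
  rw [endpoint_append]; rfl

@[simp]
lemma endpoint_concat_N (l : List Step) : endpoint (l ++ [N]) = endpoint l + (0, 1) := by
  rw [endpoint_append]; rfl

lemma endpoint_fst_add_snd (l : List Step) : (endpoint l).1 + (endpoint l).2 = l.length := by
  simp only [endpoint]; exact_mod_cast count_E_add_count_N l

lemma endpoint_eq_iff {l l' : List Step} :
    endpoint l = endpoint l' ↔ l.count E = l'.count E ∧ l.length = l'.length := by
  have := endpoint_fst_add_snd l
  have := endpoint_fst_add_snd l'
  simp only [endpoint, Prod.ext_iff] at *
  omega

lemma endpoint_ne_origin {l : List Step} (hl : l ≠ []) : endpoint l ≠ (0, 0) := by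
  intro h
  have hlen := endpoint_fst_add_snd l
  rw [h] at hlen
  exact hl (List.length_eq_zero_iff.mp (by simpa using hlen.symm))

lemma endpoint_mem_vertices (l : List Step) : endpoint l ∈ vertices l :=
  ⟨l.length, le_rfl, by rw [List.take_length]⟩

lemma le_endpoint_of_mem_vertices {l : List Step} {p : ℤ × ℤ} (hp : p ∈ vertices l) :
    p ≤ endpoint l := by
  obtain ⟨i, -, rfl⟩ := hp
  simp only [endpoint, Prod.mk_le_mk, Nat.cast_le]
  exact ⟨(l.take_sublist i).count_le _, (l.take_sublist i).count_le _⟩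

lemma vertices_concat (l : List Step) (s : Step) :
    vertices (l ++ [s]) = insert (endpoint (l ++ [s])) (vertices l) := by
  ext p
  constructor
  · rintro ⟨i, hi, rfl⟩
    rw [List.length_append, List.length_singleton] at hi
    rcases hi.lt_or_eq with hi | rfl
    · exact Or.inr ⟨i, by omega, by rw [List.take_append_of_le_length (by omega)]⟩
    · exact Or.inl (by rw [show l.length + 1 = (l ++ [s]).length by simp, List.take_length])
  · rintro (rfl | ⟨i, hi, rfl⟩)
    · exact endpoint_mem_vertices _
    · exact ⟨i, by simp; omega, by rw [List.take_append_of_le_length hi]⟩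

lemma endpoint_concat_notMem_vertices (l : List Step) (s : Step) :
    endpoint (l ++ [s]) ∉ vertices l := fun h => by
  have hle := le_endpoint_of_mem_vertices h
  have := endpoint_fst_add_snd l
  have := endpoint_fst_add_snd (l ++ [s])
  simp only [List.length_append, List.length_singleton, Prod.le_def] at *
  omega

lemma weaklyAbove_concat {γ γ₂ : List Step} {s : Step} (h : weaklyAbove γ γ₂)
    (he : endpoint (γ ++ [s]) = endpoint γ₂) : weaklyAbove (γ ++ [s]) γ₂ := by
  intro p hp q hq hx
  rcases (vertices_concat γ s ▸ hp : p ∈ insert _ _) with rfl | hp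
  · exact he ▸ (le_endpoint_of_mem_vertices hq).2
  · exact h p hp q hq hx

lemma getLast?_eq_E_of_weaklyAbove {γ₁ γ₂ : List Step} (hne : γ₁ ≠ []) (h : weaklyAbove γ₁ γ₂)
    (he : endpoint γ₁ = endpoint γ₂) : γ₁.getLast? = some E := by
  obtain ⟨γ, s, rfl⟩ := (List.eq_nil_or_concat' γ₁).resolve_left hne
  cases s
  · simp
  · have hγ : endpoint γ ∈ vertices (γ ++ [N]) := by
      rw [vertices_concat]; exact Or.inr (endpoint_mem_vertices γ)
    have := h _ hγ _ (endpoint_mem_vertices γ₂)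
    simp only [endpoint_concat_N, ← he, Prod.fst_add, Prod.snd_add] at this
    omega

lemma count_E_take_lt_of_disjoint {γ₁ γ₂ : List Step} (h₁ : γ₁.head? = some N)
    (h₂ : γ₂.head? = some E) (hdisj : ∀ q ∈ vertices γ₁ ∩ vertices γ₂, q = (0, 0))
    {i : ℕ} (hi : 1 ≤ i) (hi₁ : i ≤ γ₁.length) (hi₂ : i ≤ γ₂.length) :
    (γ₁.take i).count E < (γ₂.take i).count E := by
  induction i, hi using Nat.le_induction with
  | base => rw [List.take_one_of_head? h₁, List.take_one_of_head? h₂]; decide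
  | succ i hi ih =>
    have hne : endpoint (γ₁.take (i + 1)) ≠ endpoint (γ₂.take (i + 1)) := fun heq =>
      endpoint_ne_origin (List.ne_nil_of_length_pos (by rw [List.length_take]; omega))
        (hdisj _ ⟨⟨i + 1, hi₁, rfl⟩, ⟨i + 1, hi₂, heq.symm⟩⟩)
    rw [Ne, endpoint_eq_iff, List.length_take, List.length_take] at hne
    have := ih (by omega) (by omega)
    have := List.count_take_add_one_le γ₁ E i
    have := (List.take_sublist_take_left (l := γ₂) (Nat.le_add_right i 1)).count_le E
    omega

lemma weaklyAbove_of_disjoint {γ₁ γ₂ : List Step} (h₁ : γ₁.head? = some N)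
    (h₂ : γ₂.head? = some E) (hdisj : ∀ q ∈ vertices γ₁ ∩ vertices γ₂, q = (0, 0)) :
    weaklyAbove γ₁ γ₂ := by
  rintro _ ⟨i, hi, rfl⟩ _ ⟨j, hj, rfl⟩ hx
  have hx' : (γ₁.take i).count E = (γ₂.take j).count E := by
    simp only [endpoint] at hx; exact_mod_cast hx
  -- equal `x`-coordinates force `γ₂` to have taken no more steps than `γ₁`
  have hji : j ≤ i := by
    by_contra! hij
    have hmono := (List.take_sublist_take_left (l := γ₂) hij.le).count_le E
    rcases Nat.eq_zero_or_pos i with rfl | hi0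
    · have := (List.take_sublist_take_left (l := γ₂) (show 1 ≤ j by omega)).count_le E
      rw [List.take_one_of_head? h₂, List.count_singleton_self] at this
      rw [List.take_zero, List.count_nil] at hx'
      omega
    · have := count_E_take_lt_of_disjoint h₁ h₂ hdisj hi0 hi (by omega)
      omega
  have h₁' := endpoint_fst_add_snd (γ₁.take i)
  have h₂' := endpoint_fst_add_snd (γ₂.take j)
  rw [List.length_take, Nat.min_eq_left hi] at h₁'
  rw [List.length_take, Nat.min_eq_left hj] at h₂'
  omega

lemma inter_vertices_concat_diff_origin_eq_iff {γ γ₂ : List Step} {s : Step}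
    (he : endpoint (γ ++ [s]) = endpoint γ₂) (h₀ : endpoint γ₂ ≠ (0, 0)) :
    (vertices (γ ++ [s]) ∩ vertices γ₂) \ {(0, 0)} = {endpoint γ₂} ↔
      ∀ q ∈ vertices γ ∩ vertices γ₂, q = (0, 0) := by
  have hnot := endpoint_concat_notMem_vertices γ s
  have hmem := endpoint_mem_vertices γ₂
  rw [he] at hnot
  rw [vertices_concat, he, Set.eq_singleton_iff_unique_mem]
  constructor
  · rintro ⟨-, h⟩ q ⟨hq, hq₂⟩
    by_contra hq0
    exact hnot (h q ⟨⟨Or.inr hq, hq₂⟩, hq0⟩ ▸ hq)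
  · intro h
    refine ⟨⟨⟨Or.inl rfl, hmem⟩, h₀⟩, ?_⟩
    rintro q ⟨⟨rfl | hq, hq₂⟩, hq0⟩
    · rfl
    · exact absurd (h q ⟨hq, hq₂⟩) hq0

lemma head?_concat_E_eq_some_N_iff {γ : List Step} :
    (γ ++ [E]).head? = some N ↔ γ.head? = some N := by
  cases γ <;> simp

theorem mem_weakPathPairs_concat_E_iff {k n : ℕ} {γ γ₂ : List Step} :
    (γ ++ [E], γ₂) ∈ WeakPathPairs k n 0 0 1 ↔ (γ, γ₂) ∈ PathPairs k n 1 1 := by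
  simp only [WeakPathPairs, PathPairs, Set.mem_ofPred_eq, Nat.sub_zero,
    head?_concat_E_eq_some_N_iff, List.length_append, List.length_singleton]
  have hstep : (endpoint (γ ++ [E])).1 = (endpoint γ).1 + 1 := by simp
  have h₀ : γ₂.head? = some E → endpoint γ₂ ≠ (0, 0) := fun h =>
    endpoint_ne_origin (by rintro rfl; simp at h)
  have hmem : endpoint (γ ++ [E]) = endpoint γ₂ → γ₂.head? = some E →
      endpoint γ₂ ∈ (vertices (γ ++ [E]) ∩ vertices γ₂) \ {(0, 0)} := fun he h =>
    ⟨⟨he ▸ endpoint_mem_vertices _, endpoint_mem_vertices γ₂⟩, h₀ h⟩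
  constructor
  · rintro ⟨hlen, hhead, hlen₂, hhead₂, -, hdist, hgood, hcard⟩
    have he : endpoint (γ ++ [E]) = endpoint γ₂ := by
      refine endpoint_eq_iff.mpr ⟨?_, by simp; omega⟩
      simp only [endpoint] at hdist; omega
    rw [Set.ncard_eq_one_iff_eq_singleton_of_mem (hmem he hhead₂),
      inter_vertices_concat_diff_origin_eq_iff he (h₀ hhead₂)] at hcard
    exact ⟨by omega, hhead, hlen₂, hhead₂, hcard, by omega, hgood⟩
  · rintro ⟨hlen, hhead, hlen₂, hhead₂, hdisj, hdist, hgood⟩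
    have hpos : 0 < γ.length := List.length_pos_iff.mpr (by rintro rfl; simp at hhead)
    have he : endpoint (γ ++ [E]) = endpoint γ₂ := by
      refine endpoint_eq_iff.mpr ⟨?_, by simp; omega⟩
      simp only [endpoint] at hdist; simp; omega
    refine ⟨by omega, hhead, hlen₂, hhead₂,
      weaklyAbove_concat (weaklyAbove_of_disjoint hhead hhead₂ hdisj) he, by omega, hgood, ?_⟩
    rw [Set.ncard_eq_one_iff_eq_singleton_of_mem (hmem he hhead₂),
      inter_vertices_concat_diff_origin_eq_iff he (h₀ hhead₂)]
    exact hdisj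

theorem getLast?_eq_E_of_mem_weakPathPairs {k n : ℕ} {p : List Step × List Step}
    (hp : p ∈ WeakPathPairs k n 0 0 1) : p.1.getLast? = some E := by
  obtain ⟨hlen, hhead, hlen₂, -, hwa, hdist, -⟩ := hp
  refine getLast?_eq_E_of_weaklyAbove (by rintro h; simp [h] at hhead) hwa ?_
  refine endpoint_eq_iff.mpr ⟨?_, by omega⟩
  simp only [endpoint] at hdist; omega

theorem irreducible_kPathPair_bijection_general (k n : ℕ) :
    (∀ p ∈ WeakPathPairs k n 0 0 1, p.1.getLast? = some Step.E) ∧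
    Set.BijOn (fun p : List Step × List Step => (p.1.dropLast, p.2))
      (WeakPathPairs k n 0 0 1) (PathPairs k n 1 1) ∧
    (WeakPathPairs k n 0 0 1).ncard = (PathPairs k n 1 1).ncard := by
  have hinv : Set.InvOn (fun p : List Step × List Step => (p.1 ++ [E], p.2))
      (fun p => (p.1.dropLast, p.2)) (WeakPathPairs k n 0 0 1) (PathPairs k n 1 1) :=
    ⟨fun p hp => by simp [List.dropLast_append_getLast? _ (getLast?_eq_E_of_mem_weakPathPairs hp)],
      fun p _ => by simp⟩
  have hbij : Set.BijOn (fun p : List Step × List Step => (p.1.dropLast, p.2))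
      (WeakPathPairs k n 0 0 1) (PathPairs k n 1 1) := by
    refine hinv.bijOn (fun p hp => ?_) fun p hp => mem_weakPathPairs_concat_E_iff.mpr hp
    rw [← hinv.1 hp] at hp
    exact mem_weakPathPairs_concat_E_iff.mp hp
  exact ⟨fun _ => getLast?_eq_E_of_mem_weakPathPairs, hbij, hbij.ncard_eq⟩

/-- From the proof of Proposition 3.1: every irreducible closed `k`-path pair has
final `γ₁`-step `E`, and deleting that step is a bijection onto `𝒫^{k,1}_{n,1}`. -/
theorem irreducible_kPathPair_bijection (k n : ℕ) (hk : 2 ≤ k) (hn : 1 ≤ n) :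
    (∀ p ∈ WeakPathPairs k n 0 0 1, p.1.getLast? = some Step.E) ∧
    Set.BijOn (fun p : List Step × List Step => (p.1.dropLast, p.2))
      (WeakPathPairs k n 0 0 1) (PathPairs k n 1 1) ∧
    (WeakPathPairs k n 0 0 1).ncard = (PathPairs k n 1 1).ncard :=
  irreducible_kPathPair_bijection_general k n
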